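/- Let n ≥ 1 and let S be an invertible n×n real matrix. Then there exists a unique n×n real symmetric positive-definite matrix X with all diagonal entries at most 1 such that tr(SᵀS X⁻¹) ≤ tr(SᵀS Y⁻¹) for every n×n real symmetric positive-definite matrix Y with all diagonal entries at most 1. -/

import Mathlib

/-!
The objective `f X = tr(Sᵀ S X⁻¹)` is the pointwise maximum over `W` of the functions
`Y ↦ 2 tr(W Sᵀ) - tr(W Y Wᵀ)`, which are affine in `Y`: the gap at `Y` is `tr(D Y Dᵀ)` with
`D = W - S Y⁻¹`, and it vanishes only for `W = S Y⁻¹`. Hence `f` is strictly convex on positive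
definite matrices, and its minimiser over the convex feasible set is unique.

For existence, consider the symmetric matrices with diagonal at most `1` on which all these affine
minorants are bounded by `f 1`. This set is closed, and testing it with rank-one `W = t (S u) uᵀ`
shows, since `S` is injective, that its members are positive definite; so their entries are
bounded by `1` and the set is compact. The minimum of `f` over it is the minimum over the
feasible set, because it contains every feasible `Y` with `f Y ≤ f 1`.
-/

open Matrix

namespace Matrix

section PositiveMatrices

variable {n : Type*}

lemma convex_setOf_posDef : Convex ℝ {X : Matrix n n ℝ | X.PosDef} :=
  convex_iff_forall_pos.2 fun _ hX _ hY _ _ ha hb _ => (hX.smul ha).add (hY.smul hb)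

lemma PosSemidef.sq_apply_le_mul_apply {A : Matrix n n ℝ} (hA : A.PosSemidef) (i j : n) :
    A i j ^ 2 ≤ A i i * A j j := by
  have hdet := (hA.submatrix ![i, j]).det_nonneg
  have hsymm : A j i = A i j := by simpa using hA.isHermitian.apply i j
  rw [det_fin_two] at hdet
  simp [hsymm] at hdet
  nlinarith

lemma PosSemidef.abs_apply_le_one {A : Matrix n n ℝ} (hA : A.PosSemidef)
    (hdiag : ∀ i, A i i ≤ 1) (i j : n) : |A i j| ≤ 1 := by
  have hii := hA.diag_nonneg (i := i)
  have hjj := hA.diag_nonneg (i := j)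
  refine (sq_le_one_iff_abs_le_one _).1 ((hA.sq_apply_le_mul_apply i j).trans ?_)
  nlinarith [hdiag i, hdiag j]

lemma PosDef.eq_zero_of_trace_mul_mul_transpose_eq_zero {m : Type*} [Fintype m] [Fintype n]
    {Y : Matrix n n ℝ} (hY : Y.PosDef) {D : Matrix m n ℝ} (h : trace (D * Y * Dᵀ) = 0) :
    D = 0 := by
  have hzero : D * Y * Dᵀ = 0 :=
    (hY.posSemidef.mul_mul_conjTranspose_same D).trace_eq_zero_iff.1 h
  ext i j
  by_contra hne
  have hpos := hY.dotProduct_mulVec_pos (x := D i) fun h0 => hne (congrFun h0 j)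
  have hii : D i ⬝ᵥ Y *ᵥ D i = (D * Y * Dᵀ) i i := by
    simp only [mul_apply, dotProduct, mulVec, transpose_apply, Finset.sum_mul, Finset.mul_sum]
    rw [Finset.sum_comm]
    exact Finset.sum_congr rfl fun _ _ => Finset.sum_congr rfl fun _ _ => by ring
  rw [star_trivial, hii, hzero] at hpos
  exact lt_irrefl 0 hpos

lemma continuousOn_inv_setOf_posDef [Fintype n] [DecidableEq n] :
    ContinuousOn Inv.inv {X : Matrix n n ℝ | X.PosDef} := fun X hX =>
  (continuousAt_matrix_inv X <| by
    rw [Ring.inverse_eq_inv']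
    exact continuousAt_inv₀ hX.det_pos.ne').continuousWithinAt

end PositiveMatrices

section Minorant

variable {m n : Type*} [Fintype m] [Fintype n]

def traceInvMinorant (S W : Matrix m n ℝ) (Y : Matrix n n ℝ) : ℝ :=
  2 * trace (W * Sᵀ) - trace (W * Y * Wᵀ)

lemma continuous_traceInvMinorant (S W : Matrix m n ℝ) :
    Continuous (traceInvMinorant S W) :=
  continuous_const.sub
    ((continuous_const.matrix_mul continuous_id).matrix_mul continuous_const).matrix_trace

lemma traceInvMinorant_smul_add_smul (S W : Matrix m n ℝ) (X Y : Matrix n n ℝ) {a b : ℝ}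
    (hab : a + b = 1) :
    traceInvMinorant S W (a • X + b • Y)
      = a * traceInvMinorant S W X + b * traceInvMinorant S W Y := by
  simp only [traceInvMinorant, Matrix.mul_add, Matrix.add_mul, Matrix.mul_smul,
    Matrix.smul_mul, trace_add, trace_smul, smul_eq_mul]
  linear_combination (-2 * trace (W * Sᵀ)) * hab

lemma traceInvMinorant_smul_vecMulVec (S : Matrix m n ℝ) (Y : Matrix n n ℝ) (u : n → ℝ)
    (t : ℝ) :
    traceInvMinorant S (t • vecMulVec (S *ᵥ u) u) Y
      = 2 * t * ((S *ᵥ u) ⬝ᵥ (S *ᵥ u)) - t ^ 2 * (u ⬝ᵥ Y *ᵥ u) * ((S *ᵥ u) ⬝ᵥ (S *ᵥ u)) := by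
  simp only [traceInvMinorant, transpose_smul, transpose_vecMulVec, Matrix.smul_mul,
    Matrix.mul_smul, vecMulVec_mul, vecMul_vecMulVec, vecMul_transpose, trace_smul,
    trace_vecMulVec, dotProduct_smul, smul_eq_mul, ← dotProduct_mulVec]
  ring

lemma posDef_of_forall_traceInvMinorant_le {S : Matrix m n ℝ} (hS : Function.Injective S.mulVec)
    {Y : Matrix n n ℝ} (hY : Y.IsHermitian) {M : ℝ} (h : ∀ W, traceInvMinorant S W Y ≤ M) :
    Y.PosDef := by
  refine PosDef.of_dotProduct_mulVec_pos hY fun u hu => ?_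
  rw [star_trivial]
  by_contra! hle
  have hSu0 : S *ᵥ u ≠ 0 := by simpa using hS.ne (a₂ := 0) hu
  have hSu : 0 < (S *ᵥ u) ⬝ᵥ (S *ᵥ u) := by
    simpa only [star_trivial] using dotProduct_star_self_pos_iff.2 hSu0
  obtain ⟨t, ht⟩ : ∃ t, t * ((S *ᵥ u) ⬝ᵥ (S *ᵥ u)) = |M| + 1 :=
    ⟨_, div_mul_cancel₀ _ hSu.ne'⟩
  have hbound := h (t • vecMulVec (S *ᵥ u) u)
  rw [traceInvMinorant_smul_vecMulVec] at hbound
  have hquad : 0 ≤ t ^ 2 * -(u ⬝ᵥ Y *ᵥ u) * ((S *ᵥ u) ⬝ᵥ (S *ᵥ u)) :=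
    mul_nonneg (mul_nonneg (sq_nonneg t) (neg_nonneg.2 hle)) hSu.le
  linarith [le_abs_self M, abs_nonneg M]

lemma isCompact_setOf_forall_traceInvMinorant_le {S : Matrix m n ℝ}
    (hS : Function.Injective S.mulVec) (M : ℝ) :
    IsCompact {Y : Matrix n n ℝ |
      Y.IsHermitian ∧ (∀ i, Y i i ≤ 1) ∧ ∀ W, traceInvMinorant S W Y ≤ M} := by
  have hbox : IsCompact (Set.univ.pi fun _ : n => Set.univ.pi fun _ : n => Set.Icc (-1 : ℝ) 1) :=
    isCompact_univ_pi fun _ => isCompact_univ_pi fun _ => isCompact_Icc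
  refine hbox.of_isClosed_subset ?_ fun Y ⟨hY, hdiag, hW⟩ i _ j _ => ?_
  · simp only [Set.ofPred_and, Set.ofPred_forall]
    exact (isClosed_eq continuous_id.matrix_conjTranspose continuous_id).inter
      ((isClosed_iInter fun i => isClosed_le (continuous_id.matrix_elem i i) continuous_const).inter
        (isClosed_iInter fun W => isClosed_le (continuous_traceInvMinorant S W) continuous_const))
  · exact abs_le.1 <|
      (posDef_of_forall_traceInvMinorant_le hS hY hW).posSemidef.abs_apply_le_one hdiag i j

variable [DecidableEq n]

lemma trace_mul_inv_sub_traceInvMinorant (S W : Matrix m n ℝ) {Y : Matrix n n ℝ}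
    (hY : Y.PosDef) :
    trace (Sᵀ * S * Y⁻¹) - traceInvMinorant S W Y
      = trace ((W - S * Y⁻¹) * Y * (W - S * Y⁻¹)ᵀ) := by
  have hdet : IsUnit Y.det := hY.det_pos.ne'.isUnit
  have hYinvT : (Y⁻¹)ᵀ = Y⁻¹ := by
    rw [transpose_nonsing_inv, ← conjTranspose_eq_transpose_of_trivial, hY.isHermitian.eq]
  have hcomm : trace (S * Wᵀ) = trace (W * Sᵀ) := by
    rw [← trace_transpose, transpose_mul, transpose_transpose]
  simp only [traceInvMinorant, transpose_sub, transpose_mul, hYinvT, Matrix.sub_mul,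
    Matrix.mul_sub, Matrix.mul_assoc, mul_nonsing_inv_cancel_left Y _ hdet,
    nonsing_inv_mul_cancel_left Y _ hdet, trace_sub, hcomm]
  rw [trace_mul_comm Sᵀ, Matrix.mul_assoc]
  ring

lemma traceInvMinorant_le (S W : Matrix m n ℝ) {Y : Matrix n n ℝ} (hY : Y.PosDef) :
    traceInvMinorant S W Y ≤ trace (Sᵀ * S * Y⁻¹) := by
  have hgap := (hY.posSemidef.mul_mul_conjTranspose_same (W - S * Y⁻¹)).trace_nonneg
  rw [conjTranspose_eq_transpose_of_trivial, ← trace_mul_inv_sub_traceInvMinorant S W hY] at hgap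
  linarith

lemma traceInvMinorant_mul_inv (S : Matrix m n ℝ) {Y : Matrix n n ℝ} (hY : Y.PosDef) :
    traceInvMinorant S (S * Y⁻¹) Y = trace (Sᵀ * S * Y⁻¹) := by
  have hgap := trace_mul_inv_sub_traceInvMinorant S (S * Y⁻¹) hY
  rw [sub_self, Matrix.zero_mul, Matrix.zero_mul, trace_zero] at hgap
  linarith

lemma eq_mul_inv_of_traceInvMinorant_eq {S W : Matrix m n ℝ} {Y : Matrix n n ℝ}
    (hY : Y.PosDef) (h : traceInvMinorant S W Y = trace (Sᵀ * S * Y⁻¹)) : W = S * Y⁻¹ := by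
  have hgap := trace_mul_inv_sub_traceInvMinorant S W hY
  rw [h, sub_self] at hgap
  exact sub_eq_zero.1 (hY.eq_zero_of_trace_mul_mul_transpose_eq_zero hgap.symm)

end Minorant

def posDefDiagLeOne (n : Type*) : Set (Matrix n n ℝ) :=
  {X | X.PosDef ∧ ∀ i, X i i ≤ 1}

lemma convex_posDefDiagLeOne {n : Type*} : Convex ℝ (posDefDiagLeOne n) := by
  refine convex_iff_forall_pos.2 fun X hX Y hY a b ha hb hab => ⟨?_, fun i => ?_⟩
  · exact convex_setOf_posDef hX.1 hY.1 ha.le hb.le hab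
  · have := hX.2 i
    have := hY.2 i
    simp only [add_apply, smul_apply, smul_eq_mul]
    nlinarith

section Objective

variable {m n : Type*} [Fintype m] [Fintype n] [DecidableEq n] {S : Matrix m n ℝ}

lemma strictConvexOn_trace_mul_inv (hS : Function.Injective S.mulVec) :
    StrictConvexOn ℝ {X : Matrix n n ℝ | X.PosDef} fun X => trace (Sᵀ * S * X⁻¹) := by
  refine ⟨convex_setOf_posDef, fun X hX Y hY hXY a b ha hb hab => ?_⟩
  have hZ : (a • X + b • Y).PosDef := convex_setOf_posDef hX hY ha.le hb.le hab
  set W := S * (a • X + b • Y)⁻¹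
  have hvalue : trace (Sᵀ * S * (a • X + b • Y)⁻¹)
      = a * traceInvMinorant S W X + b * traceInvMinorant S W Y := by
    rw [← traceInvMinorant_mul_inv S hZ, traceInvMinorant_smul_add_smul S W X Y hab]
  have hWX := traceInvMinorant_le S W hX
  have hWY := traceInvMinorant_le S W hY
  simp only [smul_eq_mul, hvalue]
  refine lt_of_le_of_ne (by nlinarith) fun heq => hXY ?_
  have hX' : W = S * X⁻¹ := eq_mul_inv_of_traceInvMinorant_eq hX (by nlinarith)
  have hY' : W = S * Y⁻¹ := eq_mul_inv_of_traceInvMinorant_eq hY (by nlinarith)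
  have hinv : X⁻¹ = Y⁻¹ := ext_iff_mulVec.2 fun v => hS <| by
    rw [mulVec_mulVec, mulVec_mulVec, ← hX', hY']
  exact inv_inj hinv hX.det_pos.ne'.isUnit

lemma exists_isMinOn_trace_mul_inv (hS : Function.Injective S.mulVec) :
    ∃ X ∈ posDefDiagLeOne n,
      IsMinOn (fun X => trace (Sᵀ * S * X⁻¹)) (posDefDiagLeOne n) X := by
  set f := fun X : Matrix n n ℝ => trace (Sᵀ * S * X⁻¹)
  set C := {Y : Matrix n n ℝ |
      Y.IsHermitian ∧ (∀ i, Y i i ≤ 1) ∧ ∀ W, traceInvMinorant S W Y ≤ f 1}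
  have hCpd : C ⊆ {Y | Y.PosDef} := fun Y hY =>
    posDef_of_forall_traceInvMinorant_le hS hY.1 hY.2.2
  have hone : (1 : Matrix n n ℝ) ∈ C :=
    ⟨isHermitian_one, fun i => (one_apply_eq i).le, fun W => traceInvMinorant_le S W .one⟩
  have hf : ContinuousOn f C :=
    (continuous_const.matrix_mul continuous_id).matrix_trace.comp_continuousOn
      (continuousOn_inv_setOf_posDef.mono hCpd)
  obtain ⟨X, hXC, hXmin⟩ :=
    (isCompact_setOf_forall_traceInvMinorant_le hS (f 1)).exists_isMinOn ⟨1, hone⟩ hf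
  refine ⟨X, ⟨hCpd hXC, hXC.2.1⟩, fun Y hY => ?_⟩
  by_cases hY1 : f Y ≤ f 1
  · exact hXmin ⟨hY.1.isHermitian, hY.2, fun W => (traceInvMinorant_le S W hY.1).trans hY1⟩
  · exact (hXmin hone).trans (le_of_not_ge hY1)

end Objective

end Matrix

theorem trace_inv_min_exists_unique_general (n : ℕ)
    (S : Matrix (Fin n) (Fin n) ℝ) (hS : IsUnit S.det) :
    ∃! X : Matrix (Fin n) (Fin n) ℝ,
      (X.PosDef ∧ ∀ i : Fin n, X i i ≤ 1) ∧
      ∀ Y : Matrix (Fin n) (Fin n) ℝ, Y.PosDef → (∀ i : Fin n, Y i i ≤ 1) →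
        Matrix.trace (Sᵀ * S * X⁻¹) ≤ Matrix.trace (Sᵀ * S * Y⁻¹) := by
  have hSinj : Function.Injective S.mulVec :=
    mulVec_injective_iff_isUnit.2 ((isUnit_iff_isUnit_det S).2 hS)
  obtain ⟨X, hX, hXmin⟩ := exists_isMinOn_trace_mul_inv hSinj
  have hstrict := (strictConvexOn_trace_mul_inv hSinj).subset (fun _ hY => hY.1)
    convex_posDefDiagLeOne
  refine ⟨X, ⟨hX, fun Y hY hYdiag => hXmin ⟨hY, hYdiag⟩⟩, fun Y ⟨hY, hYmin⟩ => ?_⟩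
  exact hstrict.eq_of_isMinOn (fun Z hZ => hYmin Z hZ.1 hZ.2) hXmin hY hX

/-- Theorem `existence_and_uniqueness`: for invertible `S`, the problem
`min tr(SᵀS X⁻¹)` over symmetric positive-definite `X` with diagonal entries
at most `1` has a unique minimizer. -/
theorem trace_inv_min_exists_unique (n : ℕ) (hn : 1 ≤ n)
    (S : Matrix (Fin n) (Fin n) ℝ) (hS : IsUnit S.det) :
    ∃! X : Matrix (Fin n) (Fin n) ℝ,
      (X.PosDef ∧ ∀ i : Fin n, X i i ≤ 1) ∧
      ∀ Y : Matrix (Fin n) (Fin n) ℝ, Y.PosDef → (∀ i : Fin n, Y i i ≤ 1) →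
        Matrix.trace (Sᵀ * S * X⁻¹) ≤ Matrix.trace (Sᵀ * S * Y⁻¹) :=
  trace_inv_min_exists_unique_general n S hS
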